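/- Let A = (a_{st}) ∈ M(n,ℍ) and fix i ∈ {1,…,n}. Then rdet_i A = Σ_{j=1}^n a_{ij} · R_{ij}, where the right ij-th cofactor is R_{ij} = −rdet_j (A^{ii}_{.j}(a_{.i})) for j ≠ i and R_{ii} = rdet_k (A^{ii}) with k = min({1,…,n} \ {i}); here A^{ii} denotes the matrix obtained from A by deleting its i-th row and i-th column, a_{.i} denotes the i-th column of A, and A^{ii}_{.j}(a_{.i}) is obtained from A by replacing the j-th column with the i-th column and then deleting both the i-th row and the i-th column. -/

import Mathlib

open scoped Quaternion
open Matrix Filter Topology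

noncomputable section

/-- The product of entries along the cycle of `σ` containing `c`, written in left-ordered
cycle notation starting at `c`: `a_{c, σc} a_{σc, σ²c} ⋯ a_{σ^{l}c, c}`. -/
def cycProdL {n : ℕ} (A : Matrix (Fin n) (Fin n) ℍ[ℝ]) (σ : Equiv.Perm (Fin n))
    (c : Fin n) : ℍ[ℝ] :=
  ((List.range (Function.minimalPeriod (⇑σ) c)).map
    fun t => A ((σ ^ t) c) ((σ ^ (t + 1)) c)).prod

/-- The product of entries along the cycle of `σ` containing `c`, written in right-ordered
cycle notation ending at `c`: `a_{c, σ^{l}c} a_{σ^{l}c, σ^{l-1}c} ⋯ a_{σc, c}`. -/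
def cycProdR {n : ℕ} (A : Matrix (Fin n) (Fin n) ℍ[ℝ]) (σ : Equiv.Perm (Fin n))
    (c : Fin n) : ℍ[ℝ] :=
  (((List.range (Function.minimalPeriod (⇑σ) c)).map
    fun t => A ((σ ^ (t + 1)) c) ((σ ^ t) c)).reverse).prod

/-- The number `r` of disjoint cycles (fixed points included) of a permutation:
the number of points that are minimal in their own cycle. -/
def cycCount {n : ℕ} (σ : Equiv.Perm (Fin n)) : ℕ :=
  (Finset.univ.filter fun c : Fin n => ∀ d, σ.SameCycle c d → c ≤ d).card

/-- The `i`-th row determinant of a square quaternion matrix: the cycle containing `i`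
is written first, starting with `i`; all other cycles start with their smallest elements
and are ordered from left to right by increasing first elements. -/
def rdet {n : ℕ} (A : Matrix (Fin n) (Fin n) ℍ[ℝ]) (i : Fin n) : ℍ[ℝ] :=
  ∑ σ : Equiv.Perm (Fin n),
    (-1 : ℍ[ℝ]) ^ (n - cycCount σ) *
      (cycProdL A σ i *
        (((List.finRange n).filter fun c =>
            decide (¬σ.SameCycle i c ∧ ∀ d, σ.SameCycle c d → c ≤ d)).map
          (cycProdL A σ)).prod)

/-- The `j`-th column determinant of a square quaternion matrix: the cycle containing `j`
is written last, ending with `j`; all other cycles end with their smallest elements,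
the last elements increasing from right to left. -/
def cdet {n : ℕ} (A : Matrix (Fin n) (Fin n) ℍ[ℝ]) (j : Fin n) : ℍ[ℝ] :=
  ∑ σ : Equiv.Perm (Fin n),
    (-1 : ℍ[ℝ]) ^ (n - cycCount σ) *
      ((((((List.finRange n).filter fun c =>
            decide (¬σ.SameCycle j c ∧ ∀ d, σ.SameCycle c d → c ≤ d)).map
          (cycProdR A σ)).reverse).prod) * cycProdR A σ j)

/-- The determinant of a Hermitian quaternion matrix (the common value of all row and
column determinants): every cycle is written starting with its smallest element and the
cycles are ordered from left to right by increasing first elements. -/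
def hdet {n : ℕ} (A : Matrix (Fin n) (Fin n) ℍ[ℝ]) : ℍ[ℝ] :=
  ∑ σ : Equiv.Perm (Fin n),
    (-1 : ℍ[ℝ]) ^ (n - cycCount σ) *
      (((List.finRange n).filter fun c =>
          decide (∀ d, σ.SameCycle c d → c ≤ d)).map
        (cycProdL A σ)).prod

/-- The double determinant of a square quaternion matrix. -/
def ddet {n : ℕ} (A : Matrix (Fin n) (Fin n) ℍ[ℝ]) : ℍ[ℝ] := hdet (Aᴴ * A)

/-- The rank of a quaternion matrix: the maximal number of right linearly independent
columns, i.e. the dimension of the right ℍ-span of the columns. -/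
def qrank {m n : ℕ} (A : Matrix (Fin m) (Fin n) ℍ[ℝ]) : ℕ :=
  Module.finrank ℍ[ℝ]ᵐᵒᵖ
    (Submodule.span ℍ[ℝ]ᵐᵒᵖ (Set.range fun j : Fin n => fun i => A i j))

/-- The Frobenius norm of a quaternion matrix. -/
def fnorm {m n : ℕ} (A : Matrix (Fin m) (Fin n) ℍ[ℝ]) : ℝ :=
  Real.sqrt (∑ i, ∑ j, ‖A i j‖ ^ 2)

/-- `X` is the Moore–Penrose inverse of `A`: the four Penrose equations. -/
def IsMP {m n : ℕ} (A : Matrix (Fin m) (Fin n) ℍ[ℝ])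
    (X : Matrix (Fin n) (Fin m) ℍ[ℝ]) : Prop :=
  A * X * A = A ∧ X * A * X = X ∧ (A * X)ᴴ = A * X ∧ (X * A)ᴴ = X * A

/-- The right `ij`-th cofactor of `A`: for `j ≠ i` it is `−rdet_j` of the matrix obtained
from `A` by replacing the `j`-th column with the `i`-th column and deleting the `i`-th row
and column (the index of that column in the submatrix being the unique `t` with
`i.succAbove t = j`); for `j = i` it is `rdet_k` of `A` with the `i`-th row and column
deleted, where `k = min({1,…,n} \ {i})` corresponds to the index `0` of the submatrix. -/
def Rcof {n : ℕ} (A : Matrix (Fin (n + 2)) (Fin (n + 2)) ℍ[ℝ]) (i j : Fin (n + 2)) :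
    ℍ[ℝ] :=
  if j = i then rdet (A.submatrix i.succAbove i.succAbove) 0
  else
    -∑ t ∈ Finset.univ.filter fun t : Fin (n + 1) => i.succAbove t = j,
      rdet ((A.updateCol j fun s => A s i).submatrix i.succAbove i.succAbove) t

/-!
Every permutation `σ` of the indices is uniquely `(i j) * τ̂` with `j = σ i`, where `τ̂` fixes `i`
and acts on the other indices (identified with those of `A^{ii}` through `i.succAbove`) as a
permutation `τ`. If `j = i`, then `{i}` is a cycle of `σ` and the other cycles are those of `τ`;
since `k` is the smallest index, listing the cycle of `k` first is the same as ordering by minima,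
so the term of `σ` in `rdet_i A` is `a_ii` times the term of `τ` in `rdet_k (A^{ii})`. If `j ≠ i`,
the cycle of `σ` through `i` is the cycle of `τ` through `j` with `i` inserted before `j`: read
from `i`, its product is `a_ij` times the cycle product of `τ` at `j` in `A^{ii}_{.j}(a_{.i})`,
whose new column `j` supplies the entry `a_{σ⁻¹i, i}` that closes the cycle. The remaining cycles
are again those of `τ`, so `σ` has as many cycles as `τ` on one index more, and the sign flips.
-/

open Equiv Function

namespace Equiv.Perm

variable {α β : Type*}

theorem sameCycle_iff_exists_nat_pow [Finite α] {σ : Perm α} {x y : α} :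
    σ.SameCycle x y ↔ ∃ k : ℕ, (σ ^ k) x = y :=
  ⟨SameCycle.exists_nat_pow_eq, fun ⟨k, h⟩ => ⟨k, by simpa using h⟩⟩

theorem minimalPeriod_pos_of_finite [Finite α] (σ : Perm α) (x : α) :
    0 < minimalPeriod σ x :=
  minimalPeriod_pos_of_mem_periodicPts (σ.injective.mem_periodicPts x)

theorem pow_succ_apply (σ : Perm α) (k : ℕ) (x : α) : (σ ^ (k + 1)) x = σ ((σ ^ k) x) := by
  rw [pow_succ', mul_apply]

theorem pow_apply_mod_minimalPeriod (σ : Perm α) (x : α) (k : ℕ) :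
    (σ ^ (k % minimalPeriod σ x)) x = (σ ^ k) x :=
  iterate_mod_minimalPeriod_eq

theorem minimalPeriod_eq_of_pow_apply_self [Finite α] {σ : Perm α} {x : α} {m : ℕ}
    (hm : 0 < m) (hper : (σ ^ m) x = x) (hne : ∀ k, 0 < k → k < m → (σ ^ k) x ≠ x) :
    minimalPeriod σ x = m := by
  by_contra hlt
  exact hne _ (σ.minimalPeriod_pos_of_finite x)
    (lt_of_le_of_ne (IsPeriodicPt.minimalPeriod_le hm hper) hlt)
    (isPeriodicPt_minimalPeriod σ x)

section Semiconj

variable {σ : Perm α} {τ : Perm β} {g : β → α} {x : β}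

theorem pow_apply_eq_of_forall_apply (h : ∀ k : ℕ, σ (g ((τ ^ k) x)) = g (τ ((τ ^ k) x)))
    (k : ℕ) : (σ ^ k) (g x) = g ((τ ^ k) x) := by
  induction k with
  | zero => rfl
  | succ k ih => rw [pow_succ_apply, ih, h, pow_succ_apply]

theorem minimalPeriod_eq_of_pow_apply_eq (hg : Injective g)
    (horbit : ∀ k : ℕ, (σ ^ k) (g x) = g ((τ ^ k) x)) :
    minimalPeriod σ (g x) = minimalPeriod τ x :=
  minimalPeriod_eq_minimalPeriod_iff.mpr fun k => by
    change (σ ^ k) (g x) = g x ↔ (τ ^ k) x = x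
    rw [horbit, hg.eq_iff]

theorem forall_sameCycle_le_iff_of_pow_apply_eq [Finite α] [Finite β] [Preorder α]
    [LinearOrder β] (hg : StrictMono g) (horbit : ∀ k : ℕ, (σ ^ k) (g x) = g ((τ ^ k) x)) :
    (∀ d, σ.SameCycle (g x) d → g x ≤ d) ↔ ∀ y, τ.SameCycle x y → x ≤ y := by
  simp only [sameCycle_iff_exists_nat_pow, forall_exists_index, forall_apply_eq_imp_iff,
    horbit, hg.le_iff_le]

end Semiconj

end Equiv.Perm

open Equiv.Perm Finset

theorem cycProdL_eq_prod_apply {N : ℕ} (A : Matrix (Fin N) (Fin N) ℍ[ℝ]) (σ : Perm (Fin N))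
    (c : Fin N) :
    cycProdL A σ c =
      ((List.range (minimalPeriod σ c)).map fun k => A ((σ ^ k) c) (σ ((σ ^ k) c))).prod := by
  simp only [cycProdL, pow_succ_apply]

theorem cycProdL_eq_of_pow_apply_eq {M N : ℕ} {A : Matrix (Fin M) (Fin M) ℍ[ℝ]}
    {B : Matrix (Fin N) (Fin N) ℍ[ℝ]} {σ : Perm (Fin M)} {τ : Perm (Fin N)}
    {g : Fin N → Fin M} {x : Fin N} (hg : Injective g)
    (horbit : ∀ k : ℕ, (σ ^ k) (g x) = g ((τ ^ k) x))
    (hB : ∀ y, B y (τ y) = A (g y) (σ (g y))) :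
    cycProdL A σ (g x) = cycProdL B τ x := by
  simp only [cycProdL_eq_prod_apply, minimalPeriod_eq_of_pow_apply_eq hg horbit, horbit, hB]

theorem List.filter_finRange_succAbove {n : ℕ} (i : Fin (n + 1)) (p : Fin (n + 1) → Bool)
    (hp : p i = false) :
    (finRange (n + 1)).filter p = ((finRange n).filter (p ∘ i.succAbove)).map i.succAbove := by
  refine ((sortedLT_finRange _).pairwise.filter _).eq_of_mem_iff
    ((((sortedLT_finRange _).pairwise.filter _).map _ fun _ _ h =>
      Fin.strictMono_succAbove i h)) fun c => ?_
  simp only [List.mem_filter, List.mem_finRange, true_and, List.mem_map, Function.comp_apply]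
  constructor
  · intro hc
    obtain ⟨x, rfl⟩ :=
      Fin.exists_succAbove_eq (x := c) (y := i) (by rintro rfl; simp [hp] at hc)
    exact ⟨x, hc, rfl⟩
  · rintro ⟨x, hx, rfl⟩
    exact hx

theorem Fin.card_filter_univ_eq_length_filter_finRange {n : ℕ} (p : Fin n → Prop)
    [DecidablePred p] :
    #{x | p x} = ((List.finRange n).filter fun x => decide (p x)).length := by
  rw [← List.toFinset_card_of_nodup ((List.nodup_finRange n).filter _)]
  congr 1
  ext x
  simp

def otherCycleMins {N : ℕ} (σ : Perm (Fin N)) (c : Fin N) : List (Fin N) :=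
  (List.finRange N).filter fun d =>
    decide (¬σ.SameCycle c d ∧ ∀ e, σ.SameCycle d e → d ≤ e)

def rdetTerm {N : ℕ} (A : Matrix (Fin N) (Fin N) ℍ[ℝ]) (i : Fin N) (σ : Perm (Fin N)) :
    ℍ[ℝ] :=
  (-1 : ℍ[ℝ]) ^ (N - cycCount σ) *
    (cycProdL A σ i * ((otherCycleMins σ i).map (cycProdL A σ)).prod)

theorem rdet_eq_sum_rdetTerm {N : ℕ} (A : Matrix (Fin N) (Fin N) ℍ[ℝ]) (i : Fin N) :
    rdet A i = ∑ σ, rdetTerm A i σ :=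
  rfl

theorem card_filter_sameCycle_forall_le_eq_one {N : ℕ} (σ : Perm (Fin N)) (c : Fin N) :
    #{d | (∀ e, σ.SameCycle d e → d ≤ e) ∧ σ.SameCycle c d} = 1 := by
  have hne : (univ.filter (σ.SameCycle c)).Nonempty := ⟨c, by simp [SameCycle.refl]⟩
  set m := (univ.filter (σ.SameCycle c)).min' hne
  have hm : σ.SameCycle c m := by simpa using min'_mem _ hne
  rw [card_eq_one]
  refine ⟨m, ext fun d => ?_⟩
  simp only [mem_filter, mem_univ, true_and, mem_singleton]
  constructor
  · rintro ⟨hd, hcd⟩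
    exact le_antisymm (hd m (hcd.symm.trans hm)) (min'_le _ _ (by simpa using hcd))
  · rintro rfl
    exact ⟨fun e he => min'_le _ _ (by simpa using hm.trans he), hm⟩

theorem cycCount_eq_length_otherCycleMins_add_one {N : ℕ} (σ : Perm (Fin N)) (c : Fin N) :
    cycCount σ = (otherCycleMins σ c).length + 1 := by
  rw [cycCount, ← card_filter_add_card_filter_not (σ.SameCycle c), filter_filter,
    filter_filter, card_filter_sameCycle_forall_le_eq_one, add_comm,
    Fin.card_filter_univ_eq_length_filter_finRange, otherCycleMins]
  simp only [and_comm]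

theorem cycCount_le {N : ℕ} (σ : Perm (Fin N)) : cycCount σ ≤ N :=
  (card_filter_le _ _).trans_eq (card_fin N)

theorem filter_forall_sameCycle_le_eq_cons_zero {n : ℕ} (τ : Perm (Fin (n + 1))) :
    (List.finRange (n + 1)).filter (fun x => decide (∀ y, τ.SameCycle x y → x ≤ y)) =
      0 :: otherCycleMins τ 0 := by
  rw [otherCycleMins, List.finRange_succ, List.filter_cons, List.filter_cons,
    if_pos (by simp), if_neg (by simp [SameCycle.refl])]
  congr 1
  refine List.filter_congr fun x hx => ?_
  obtain ⟨y, -, rfl⟩ := List.mem_map.mp hx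
  simp only [decide_eq_decide, iff_and_self]
  exact fun h h0 => Fin.succ_ne_zero y (Fin.le_zero_iff.mp (h 0 h0.symm))

section OtherCycles

variable {n : ℕ} (i : Fin (n + 1)) {σ : Perm (Fin (n + 1))} {τ : Perm (Fin n)}
  (Q : Fin n → Prop) [DecidablePred Q]

theorem otherCycleMins_eq_map_succAbove (hQ : ∀ x, Q x ↔ ¬σ.SameCycle i (i.succAbove x))
    (horbit : ∀ x, Q x → ∀ k : ℕ, (σ ^ k) (i.succAbove x) = i.succAbove ((τ ^ k) x)) :
    otherCycleMins σ i =
      ((List.finRange n).filter fun x => decide (Q x ∧ ∀ y, τ.SameCycle x y → x ≤ y)).map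
        i.succAbove := by
  rw [otherCycleMins, List.filter_finRange_succAbove i _ (by simp [SameCycle.refl])]
  congr 1
  refine List.filter_congr fun x _ => ?_
  simp only [Function.comp_apply, decide_eq_decide, ← hQ]
  exact and_congr_right fun hx =>
    forall_sameCycle_le_iff_of_pow_apply_eq (Fin.strictMono_succAbove i) (horbit x hx)

theorem map_cycProdL_otherCycleMins {A : Matrix (Fin (n + 1)) (Fin (n + 1)) ℍ[ℝ]}
    {B : Matrix (Fin n) (Fin n) ℍ[ℝ]} (hQ : ∀ x, Q x ↔ ¬σ.SameCycle i (i.succAbove x))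
    (horbit : ∀ x, Q x → ∀ k : ℕ, (σ ^ k) (i.succAbove x) = i.succAbove ((τ ^ k) x))
    (hB : ∀ y, B y (τ y) = A (i.succAbove y) (σ (i.succAbove y))) :
    (otherCycleMins σ i).map (cycProdL A σ) =
      ((List.finRange n).filter fun x => decide (Q x ∧ ∀ y, τ.SameCycle x y → x ≤ y)).map
        (cycProdL B τ) := by
  rw [otherCycleMins_eq_map_succAbove i Q hQ horbit, List.map_map]
  refine List.map_congr_left fun x hx => ?_
  have hQx : Q x := by simp_all
  exact cycProdL_eq_of_pow_apply_eq Fin.succAbove_right_injective (horbit x hQx) hB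

theorem cycCount_eq_length_filter_add_one (hQ : ∀ x, Q x ↔ ¬σ.SameCycle i (i.succAbove x))
    (horbit : ∀ x, Q x → ∀ k : ℕ, (σ ^ k) (i.succAbove x) = i.succAbove ((τ ^ k) x)) :
    cycCount σ =
      ((List.finRange n).filter fun x =>
        decide (Q x ∧ ∀ y, τ.SameCycle x y → x ≤ y)).length + 1 := by
  rw [cycCount_eq_length_otherCycleMins_add_one σ i,
    otherCycleMins_eq_map_succAbove i Q hQ horbit, List.length_map]

end OtherCycles

def cofactorPerm {n : ℕ} (i j : Fin (n + 1)) (τ : Perm (Fin n)) : Perm (Fin (n + 1)) :=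
  swap i j * τ.extendDomain (finSuccAboveEquiv i)

section CofactorPerm

variable {n : ℕ} (i j : Fin (n + 1)) (τ : Perm (Fin n))

theorem cofactorPerm_apply_self : cofactorPerm i j τ i = j := by
  simp [cofactorPerm, extendDomain_apply_not_subtype]

theorem cofactorPerm_apply_succAbove (x : Fin n) :
    cofactorPerm i j τ (i.succAbove x) = swap i j (i.succAbove (τ x)) := by
  have h := extendDomain_apply_image τ (finSuccAboveEquiv i) x
  simp_all [cofactorPerm, finSuccAboveEquiv_apply]

theorem bijective_cofactorPerm :
    Bijective fun p : Fin (n + 1) × Perm (Fin n) => cofactorPerm i p.1 p.2 := by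
  rw [Fintype.bijective_iff_injective_and_card]
  refine ⟨fun ⟨j, τ⟩ ⟨j', τ'⟩ h => ?_,
    by simp [Fintype.card_perm, Nat.factorial_succ]⟩
  obtain rfl : j = j' := by
    simpa only [cofactorPerm_apply_self] using Equiv.congr_fun h i
  have hτ : τ = τ' := Equiv.ext fun x => Fin.succAbove_right_injective (p := i) <|
    (swap i j).injective <| by
      simpa only [cofactorPerm_apply_succAbove] using Equiv.congr_fun h (i.succAbove x)
  rw [hτ]

variable {i τ} {t : Fin n}

theorem cofactorPerm_apply_succAbove_of_ne {x : Fin n} (hx : τ x ≠ t) :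
    cofactorPerm i (i.succAbove t) τ (i.succAbove x) = i.succAbove (τ x) := by
  rw [cofactorPerm_apply_succAbove, swap_apply_of_ne_of_ne (Fin.succAbove_ne i _)
    (Fin.succAbove_right_injective.ne hx)]

theorem cofactorPerm_pow_apply_succAbove_of_not_sameCycle {x : Fin n} (hx : ¬τ.SameCycle t x)
    (k : ℕ) :
    (cofactorPerm i (i.succAbove t) τ ^ k) (i.succAbove x) = i.succAbove ((τ ^ k) x) := by
  refine pow_apply_eq_of_forall_apply (fun k => cofactorPerm_apply_succAbove_of_ne ?_) k
  rw [← pow_succ_apply]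
  exact fun h => hx (h ▸ (sameCycle_pow_right.mpr (SameCycle.refl τ x))).symm

theorem cofactorPerm_pow_succ_apply_self {k : ℕ} (hk : k < minimalPeriod τ t) :
    (cofactorPerm i (i.succAbove t) τ ^ (k + 1)) i = i.succAbove ((τ ^ k) t) := by
  induction k with
  | zero => simp [cofactorPerm_apply_self]
  | succ k ih =>
    rw [pow_succ_apply, ih (by omega), cofactorPerm_apply_succAbove_of_ne, pow_succ_apply]
    rw [← pow_succ_apply]
    exact not_isPeriodicPt_of_pos_of_lt_minimalPeriod k.succ_ne_zero hk

theorem cofactorPerm_pow_minimalPeriod_succ_apply_self :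
    (cofactorPerm i (i.succAbove t) τ ^ (minimalPeriod τ t + 1)) i = i := by
  obtain ⟨m, hm⟩ := Nat.exists_eq_add_one.mpr (τ.minimalPeriod_pos_of_finite t)
  have hper : (τ ^ minimalPeriod τ t) t = t := isPeriodicPt_minimalPeriod τ t
  rw [pow_succ_apply, hm, cofactorPerm_pow_succ_apply_self (by omega),
    cofactorPerm_apply_succAbove, ← pow_succ_apply, ← hm, hper, swap_apply_right]

theorem minimalPeriod_cofactorPerm_self :
    minimalPeriod (cofactorPerm i (i.succAbove t) τ) i = minimalPeriod τ t + 1 := by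
  refine minimalPeriod_eq_of_pow_apply_self (Nat.succ_pos _)
    cofactorPerm_pow_minimalPeriod_succ_apply_self fun k hk0 hk => ?_
  obtain ⟨k, rfl⟩ := Nat.exists_eq_add_one.mpr hk0
  rw [cofactorPerm_pow_succ_apply_self (by omega)]
  exact Fin.succAbove_ne i _

theorem sameCycle_cofactorPerm_self_succAbove_iff {x : Fin n} :
    (cofactorPerm i (i.succAbove t) τ).SameCycle i (i.succAbove x) ↔ τ.SameCycle t x := by
  constructor
  · intro h
    by_contra hx
    obtain ⟨k, hk⟩ := sameCycle_iff_exists_nat_pow.mp h.symm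
    rw [cofactorPerm_pow_apply_succAbove_of_not_sameCycle hx] at hk
    exact Fin.succAbove_ne i _ hk
  · intro h
    obtain ⟨k, rfl⟩ := sameCycle_iff_exists_nat_pow.mp h
    refine sameCycle_iff_exists_nat_pow.mpr ⟨k % minimalPeriod τ t + 1, ?_⟩
    rw [cofactorPerm_pow_succ_apply_self (Nat.mod_lt _ (τ.minimalPeriod_pos_of_finite t)),
      pow_apply_mod_minimalPeriod]

end CofactorPerm

theorem submatrix_swap_apply_cofactorPerm {n : ℕ}
    (A : Matrix (Fin (n + 1)) (Fin (n + 1)) ℍ[ℝ]) (i j : Fin (n + 1)) (τ : Perm (Fin n))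
    (y : Fin n) :
    A.submatrix i.succAbove (swap i j ∘ i.succAbove) y (τ y) =
      A (i.succAbove y) (cofactorPerm i j τ (i.succAbove y)) := by
  rw [cofactorPerm_apply_succAbove]
  rfl

theorem cycProdL_cofactorPerm_self {n : ℕ} (A : Matrix (Fin (n + 1)) (Fin (n + 1)) ℍ[ℝ])
    (i : Fin (n + 1)) (t : Fin n) (τ : Perm (Fin n)) :
    cycProdL A (cofactorPerm i (i.succAbove t) τ) i =
      A i (i.succAbove t) *
        cycProdL (A.submatrix i.succAbove (swap i (i.succAbove t) ∘ i.succAbove)) τ t := by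
  rw [cycProdL_eq_prod_apply, cycProdL_eq_prod_apply, minimalPeriod_cofactorPerm_self,
    List.range_succ_eq_map, List.map_cons, List.prod_cons, List.map_map, pow_zero, one_apply,
    cofactorPerm_apply_self]
  congr 2
  refine List.map_congr_left fun k hk => ?_
  rw [Function.comp_apply, cofactorPerm_pow_succ_apply_self (List.mem_range.mp hk),
    submatrix_swap_apply_cofactorPerm]

section Expansion

variable {n : ℕ} (A : Matrix (Fin (n + 2)) (Fin (n + 2)) ℍ[ℝ]) (i : Fin (n + 2))
  (τ : Perm (Fin (n + 1)))

theorem rdetTerm_cofactorPerm_self :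
    rdetTerm A i (cofactorPerm i i τ) =
      A i i * rdetTerm (A.submatrix i.succAbove i.succAbove) 0 τ := by
  set σ := cofactorPerm i i τ
  have hfix : σ i = i := cofactorPerm_apply_self i i τ
  have hstep (x : Fin (n + 1)) : σ (i.succAbove x) = i.succAbove (τ x) := by
    simp [σ, cofactorPerm_apply_succAbove]
  have hQ (x : Fin (n + 1)) : True ↔ ¬σ.SameCycle i (i.succAbove x) :=
    iff_of_true trivial fun h => Fin.succAbove_ne i x (h.eq_of_left hfix).symm
  have horbit (x : Fin (n + 1)) (_ : True) (k : ℕ) :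
      (σ ^ k) (i.succAbove x) = i.succAbove ((τ ^ k) x) :=
    pow_apply_eq_of_forall_apply (fun k => hstep _) k
  have hcyc : cycProdL A σ i = A i i := by
    simp [cycProdL, minimalPeriod_eq_one_iff_isFixedPt.mpr hfix, hfix]
  have hB (y : Fin (n + 1)) : A.submatrix i.succAbove i.succAbove y (τ y) =
      A (i.succAbove y) (σ (i.succAbove y)) := by
    rw [hstep]; rfl
  have hsign : n + 2 - cycCount σ = n + 1 - cycCount τ := by
    have hcount := cycCount_eq_length_filter_add_one i _ hQ horbit
    simp only [true_and, filter_forall_sameCycle_le_eq_cons_zero, List.length_cons] at hcount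
    rw [hcount, cycCount_eq_length_otherCycleMins_add_one τ 0]
    omega
  rw [rdetTerm, rdetTerm, map_cycProdL_otherCycleMins i _ hQ horbit hB]
  simp only [true_and, filter_forall_sameCycle_le_eq_cons_zero, List.map_cons, List.prod_cons]
  rw [hsign, hcyc]
  exact ((Commute.neg_one_left _).pow_left _).left_comm _

theorem rdetTerm_cofactorPerm_succAbove (t : Fin (n + 1)) :
    rdetTerm A i (cofactorPerm i (i.succAbove t) τ) =
      A i (i.succAbove t) *
        -rdetTerm (A.submatrix i.succAbove (swap i (i.succAbove t) ∘ i.succAbove)) t τ := by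
  set σ := cofactorPerm i (i.succAbove t) τ
  have hQ (x : Fin (n + 1)) : ¬τ.SameCycle t x ↔ ¬σ.SameCycle i (i.succAbove x) :=
    sameCycle_cofactorPerm_self_succAbove_iff.not.symm
  have horbit (x : Fin (n + 1)) (hx : ¬τ.SameCycle t x) (k : ℕ) :
      (σ ^ k) (i.succAbove x) = i.succAbove ((τ ^ k) x) :=
    cofactorPerm_pow_apply_succAbove_of_not_sameCycle hx k
  have hsign : n + 2 - cycCount σ = n + 1 - cycCount τ + 1 := by
    rw [cycCount_eq_length_filter_add_one i _ hQ horbit, ← otherCycleMins,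
      ← cycCount_eq_length_otherCycleMins_add_one]
    have := cycCount_le τ
    omega
  rw [rdetTerm, rdetTerm, map_cycProdL_otherCycleMins i _ hQ horbit
    (submatrix_swap_apply_cofactorPerm A i _ τ), ← otherCycleMins, hsign,
    cycProdL_cofactorPerm_self, pow_succ, mul_neg_one, neg_mul, mul_assoc,
    ((Commute.neg_one_left _).pow_left _).left_comm, mul_neg]

end Expansion

theorem updateCol_submatrix_succAbove {n : ℕ} (A : Matrix (Fin (n + 1)) (Fin (n + 1)) ℍ[ℝ])
    (i j : Fin (n + 1)) :
    (A.updateCol j fun s => A s i).submatrix i.succAbove i.succAbove =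
      A.submatrix i.succAbove (swap i j ∘ i.succAbove) := by
  refine Matrix.ext fun x y => ?_
  simp only [Matrix.submatrix_apply, Matrix.updateCol_apply, Function.comp_apply, swap_apply_def,
    if_neg (Fin.succAbove_ne i y)]
  split_ifs <;> rfl

theorem Rcof_self {n : ℕ} (A : Matrix (Fin (n + 2)) (Fin (n + 2)) ℍ[ℝ]) (i : Fin (n + 2)) :
    Rcof A i i = rdet (A.submatrix i.succAbove i.succAbove) 0 :=
  if_pos rfl

theorem Rcof_succAbove {n : ℕ} (A : Matrix (Fin (n + 2)) (Fin (n + 2)) ℍ[ℝ]) (i : Fin (n + 2))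
    (t : Fin (n + 1)) :
    Rcof A i (i.succAbove t) =
      -rdet (A.submatrix i.succAbove (swap i (i.succAbove t) ∘ i.succAbove)) t := by
  simp [Rcof, Fin.succAbove_ne, Finset.filter_eq', updateCol_submatrix_succAbove]

/-- Expansion of the `i`-th row determinant by right cofactors along the `i`-th row:
`rdet_i A = Σ_{j=1}^n a_{ij} · R_{ij}`. -/
theorem rdet_cofactor_expansion {n : ℕ} (A : Matrix (Fin (n + 2)) (Fin (n + 2)) ℍ[ℝ])
    (i : Fin (n + 2)) :
    rdet A i = ∑ j, A i j * Rcof A i j := by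
  rw [rdet_eq_sum_rdetTerm, ← (bijective_cofactorPerm i).sum_comp, Fintype.sum_prod_type]
  refine sum_congr rfl fun j _ => ?_
  rcases eq_or_ne j i with rfl | hj
  · rw [Rcof_self, rdet_eq_sum_rdetTerm, mul_sum]
    exact sum_congr rfl fun τ _ => rdetTerm_cofactorPerm_self A j τ
  · obtain ⟨t, rfl⟩ := Fin.exists_succAbove_eq hj
    rw [Rcof_succAbove, rdet_eq_sum_rdetTerm, ← sum_neg_distrib, mul_sum]
    exact sum_congr rfl fun τ _ => rdetTerm_cofactorPerm_succAbove A i τ t
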